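/- Let Gamma be a subgroup of GL_2(A), alpha in Gamma, and omega in C with |omega| = |omega|_i = q^r for some rational number r that is not an integer. Let s in K, zeta in C with |zeta| = |zeta|_i = 1, and z_n = s + T^{-n} * zeta. Assume there is a constant C_0 > 0 such that |F_{gamma,s}(z) - 1| <= (|z - s| * C_0) / (|z - gamma omega| * |c*omega + d|) for all gamma = [[a,b],[c,d]] in Gamma and all z in C with |z|_i > 0 and z ≠ gamma omega, and assume there is kappa > 0 with |s - gamma omega| >= kappa / |c*omega + d| for every gamma = [[a,b],[c,d]] in Gamma. Then for every epsilon > 0 there exists a natural number n_2 such that for all n >= n_2 and all gamma in Gamma: z_n ≠ gamma omega and |F_{gamma,s}(z_n) - 1| <= epsilon. (Corollary 5.5 of the paper; the point is that |gamma omega|_i is never equal to q^{-n} because |omega| = |omega|_i lies in q^{Q \ Z}.) -/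

import Mathlib

open Polynomial Matrix
open scoped Classical

/-- The absolute value on `K_∞ = F_q((π))`: `|x| = q^{-v_∞(x)}`. -/
noncomputable def absK (Fq : Type*) [Field Fq] [Fintype Fq] (x : LaurentSeries Fq) : ℝ :=
  if x = 0 then 0 else (Fintype.card Fq : ℝ) ^ (-(HahnSeries.order x))

/-- The imaginary part `|z|_i = inf {|z - x| : x ∈ K_∞}` of an element of `C`. -/
noncomputable def imNorm (Fq : Type*) [Field Fq] {C : Type*} [NormedField C]
    [Algebra (LaurentSeries Fq) C] (z : C) : ℝ :=
  ⨅ x : LaurentSeries Fq, ‖z - algebraMap (LaurentSeries Fq) C x‖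

/-- The element `T = π⁻¹` of `K_∞ = F_q((π))`. -/
noncomputable def Tel (Fq : Type*) [Field Fq] : LaurentSeries Fq :=
  HahnSeries.single (-1 : ℤ) 1

/-- The embedding `A = F_q[T] → C`, sending `T` to `π⁻¹`. -/
noncomputable def polyEmb (Fq : Type*) [Field Fq] (C : Type*) [NormedField C]
    [Algebra (LaurentSeries Fq) C] : Polynomial Fq →+* C :=
  (algebraMap (LaurentSeries Fq) C).comp (Polynomial.aeval (Tel Fq)).toRingHom

/-- The action of `γ ∈ GL₂(A)` on `C` by fractional linear transformations. -/
noncomputable def act {Fq : Type*} [Field Fq] {C : Type*} [NormedField C]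
    [Algebra (LaurentSeries Fq) C] (g : GL (Fin 2) (Polynomial Fq)) (z : C) : C :=
  (polyEmb Fq C (g.val 0 0) * z + polyEmb Fq C (g.val 0 1)) /
    (polyEmb Fq C (g.val 1 0) * z + polyEmb Fq C (g.val 1 1))

set_option linter.unusedSectionVars false
set_option maxHeartbeats 1000000

section Aux

variable {Fq : Type*} [Field Fq] [Fintype Fq] {C : Type*} [NormedField C]
  [Algebra (LaurentSeries Fq) C]

lemma hq1 : (1 : ℝ) < Fintype.card Fq := by exact_mod_cast Fintype.one_lt_card

lemma hq0 : (0 : ℝ) < Fintype.card Fq := lt_trans one_pos hq1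

lemma rpow_inj {x y : ℝ} (h : (Fintype.card Fq : ℝ) ^ x = (Fintype.card Fq : ℝ) ^ y) : x = y :=
  le_antisymm ((Real.rpow_le_rpow_left_iff (hq1 (Fq := Fq))).mp h.le)
    ((Real.rpow_le_rpow_left_iff (hq1 (Fq := Fq))).mp h.ge)

lemma aux_norm_mem (hext : ∀ x : LaurentSeries Fq, ‖algebraMap (LaurentSeries Fq) C x‖ = absK Fq x)
    (x : LaurentSeries Fq) (hx : x ≠ 0) :
    ∃ m : ℤ, ‖algebraMap (LaurentSeries Fq) C x‖ = (Fintype.card Fq : ℝ) ^ ((m : ℝ)) := by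
  refine ⟨-x.order, ?_⟩
  rw [hext, absK, if_neg hx, Real.rpow_intCast]

lemma em_inj : Function.Injective (algebraMap (LaurentSeries Fq) C) :=
  RingHom.injective _

lemma em_ne_zero {x : LaurentSeries Fq} (hx : x ≠ 0) : algebraMap (LaurentSeries Fq) C x ≠ 0 := by
  exact (map_ne_zero_iff (algebraMap (LaurentSeries Fq) C) em_inj).mpr hx

end Aux
section Aux2

variable {Fq : Type*} [Field Fq] [Fintype Fq] {C : Type*} [NormedField C]
  [Algebra (LaurentSeries Fq) C]

lemma aux_add_right (hna : ∀ x y : C, ‖x + y‖ ≤ max ‖x‖ ‖y‖) {x y : C} (h : ‖x‖ < ‖y‖) :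
    ‖x + y‖ = ‖y‖ := by
  refine le_antisymm ((hna x y).trans_eq (max_eq_right h.le)) ?_
  have h2 : ‖y‖ ≤ max ‖x + y‖ ‖x‖ := by
    have := hna (x + y) (-x)
    simpa using this
  rcases le_max_iff.mp h2 with h3 | h3
  · exact h3
  · exact absurd h3 (not_le.mpr h)

lemma aux_add_max (hna : ∀ x y : C, ‖x + y‖ ≤ max ‖x‖ ‖y‖) {x y : C} (h : ‖x‖ ≠ ‖y‖) :
    ‖x + y‖ = max ‖x‖ ‖y‖ := by
  rcases lt_or_gt_of_ne h with h' | h'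
  · rw [aux_add_right hna h', max_eq_right h'.le]
  · rw [add_comm, aux_add_right hna h', max_eq_left h'.le]

lemma aux_sub_max (hna : ∀ x y : C, ‖x + y‖ ≤ max ‖x‖ ‖y‖) (x y : C) :
    ‖x - y‖ ≤ max ‖x‖ ‖y‖ := by
  have := hna x (-y)
  simpa [sub_eq_add_neg] using this

lemma imNorm_def (z : C) :
    imNorm Fq z = ⨅ x : LaurentSeries Fq, ‖z - algebraMap (LaurentSeries Fq) C x‖ := rfl

lemma imNorm_bdd (z : C) :
    BddBelow (Set.range fun x : LaurentSeries Fq => ‖z - algebraMap (LaurentSeries Fq) C x‖) := by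
  refine ⟨0, ?_⟩
  rintro y ⟨x, rfl⟩
  exact norm_nonneg _

lemma imNorm_le (z : C) (x : LaurentSeries Fq) :
    imNorm Fq z ≤ ‖z - algebraMap (LaurentSeries Fq) C x‖ :=
  ciInf_le (imNorm_bdd z) x

lemma imNorm_le_norm (z : C) : imNorm Fq z ≤ ‖z‖ := by
  have h := imNorm_le (Fq := Fq) z 0
  rwa [map_zero, sub_zero] at h

lemma le_imNorm {z : C} {M : ℝ}
    (h : ∀ x : LaurentSeries Fq, M ≤ ‖z - algebraMap (LaurentSeries Fq) C x‖) :
    M ≤ imNorm Fq z :=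
  le_ciInf h

lemma imNorm_nonneg (z : C) : 0 ≤ imNorm Fq z :=
  Real.iInf_nonneg fun _ => norm_nonneg _

lemma imNorm_add_em (z : C) (x₀ : LaurentSeries Fq) :
    imNorm Fq (z + algebraMap (LaurentSeries Fq) C x₀) = imNorm Fq z := by
  apply le_antisymm
  · refine le_imNorm fun x => ?_
    calc imNorm Fq (z + algebraMap (LaurentSeries Fq) C x₀)
        ≤ ‖z + algebraMap (LaurentSeries Fq) C x₀ - algebraMap (LaurentSeries Fq) C (x + x₀)‖ :=
          imNorm_le _ _
      _ = ‖z - algebraMap (LaurentSeries Fq) C x‖ := by rw [map_add]; ring_nf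
  · refine le_imNorm fun x => ?_
    calc imNorm Fq z
        ≤ ‖z - algebraMap (LaurentSeries Fq) C (x - x₀)‖ := imNorm_le _ _
      _ = ‖z + algebraMap (LaurentSeries Fq) C x₀ - algebraMap (LaurentSeries Fq) C x‖ := by
          rw [map_sub]; ring_nf

lemma imNorm_neg (z : C) : imNorm Fq (-z) = imNorm Fq z := by
  have key : ∀ w : C, imNorm Fq (-w) ≤ imNorm Fq w := by
    intro w
    refine le_imNorm fun x => ?_
    calc imNorm Fq (-w) ≤ ‖-w - algebraMap (LaurentSeries Fq) C (-x)‖ := imNorm_le _ _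
      _ = ‖w - algebraMap (LaurentSeries Fq) C x‖ := by rw [map_neg, show -w - -(algebraMap (LaurentSeries Fq) C x) = -(w - algebraMap (LaurentSeries Fq) C x) by ring, norm_neg]
  refine le_antisymm (key z) ?_
  have := key (-z)
  rwa [neg_neg] at this

lemma imNorm_smul {c : LaurentSeries Fq} (hc : c ≠ 0) (z : C) :
    imNorm Fq (algebraMap (LaurentSeries Fq) C c * z)
      = ‖algebraMap (LaurentSeries Fq) C c‖ * imNorm Fq z := by
  have hc0 : (0 : ℝ) < ‖algebraMap (LaurentSeries Fq) C c‖ :=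
    norm_pos_iff.mpr (em_ne_zero hc)
  apply le_antisymm
  · have h1 : ∀ x : LaurentSeries Fq,
        imNorm Fq (algebraMap (LaurentSeries Fq) C c * z) / ‖algebraMap (LaurentSeries Fq) C c‖
          ≤ ‖z - algebraMap (LaurentSeries Fq) C x‖ := by
      intro x
      rw [div_le_iff₀ hc0]
      calc imNorm Fq (algebraMap (LaurentSeries Fq) C c * z)
          ≤ ‖algebraMap (LaurentSeries Fq) C c * z - algebraMap (LaurentSeries Fq) C (c * x)‖ :=
            imNorm_le _ _
        _ = ‖z - algebraMap (LaurentSeries Fq) C x‖ * ‖algebraMap (LaurentSeries Fq) C c‖ := by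
            rw [_root_.map_mul, ← mul_sub, norm_mul, mul_comm]
    have h2 := le_imNorm h1
    rw [div_le_iff₀ hc0] at h2
    linarith [h2]
  · refine le_imNorm fun x => ?_
    calc ‖algebraMap (LaurentSeries Fq) C c‖ * imNorm Fq z
        ≤ ‖algebraMap (LaurentSeries Fq) C c‖ * ‖z - algebraMap (LaurentSeries Fq) C (x / c)‖ :=
          mul_le_mul_of_nonneg_left (imNorm_le _ _) hc0.le
      _ = ‖algebraMap (LaurentSeries Fq) C c * z - algebraMap (LaurentSeries Fq) C x‖ := by
          rw [← norm_mul, mul_sub, ← _root_.map_mul, mul_div_cancel₀ _ hc]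

lemma imNorm_add_le_max (hna : ∀ x y : C, ‖x + y‖ ≤ max ‖x‖ ‖y‖) (z w : C) :
    imNorm Fq (z + w) ≤ max (imNorm Fq z) (imNorm Fq w) := by
  refine le_of_forall_pos_le_add fun δ hδ => ?_
  obtain ⟨a, ha⟩ := exists_lt_of_ciInf_lt (show imNorm Fq z < imNorm Fq z + δ by linarith)
  obtain ⟨b, hb⟩ := exists_lt_of_ciInf_lt (show imNorm Fq w < imNorm Fq w + δ by linarith)
  calc imNorm Fq (z + w)
      ≤ ‖z + w - algebraMap (LaurentSeries Fq) C (a + b)‖ := imNorm_le _ _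
    _ ≤ max ‖z - algebraMap (LaurentSeries Fq) C a‖ ‖w - algebraMap (LaurentSeries Fq) C b‖ := by
        have h := hna (z - algebraMap (LaurentSeries Fq) C a) (w - algebraMap (LaurentSeries Fq) C b)
        rw [map_add]
        convert h using 2
        ring
    _ ≤ max (imNorm Fq z + δ) (imNorm Fq w + δ) := max_le_max ha.le hb.le
    _ = max (imNorm Fq z) (imNorm Fq w) + δ := max_add_add_right _ _ _

lemma imNorm_add_eq_left (hna : ∀ x y : C, ‖x + y‖ ≤ max ‖x‖ ‖y‖) {z w : C}
    (h : imNorm Fq w < imNorm Fq z) : imNorm Fq (z + w) = imNorm Fq z := by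
  refine le_antisymm ((imNorm_add_le_max hna z w).trans_eq (max_eq_left h.le)) ?_
  have h2 : imNorm Fq z ≤ max (imNorm Fq (z + w)) (imNorm Fq w) := by
    have := imNorm_add_le_max (Fq := Fq) hna (z + w) (-w)
    rw [imNorm_neg] at this
    have h4 : z + w + -w = z := by ring
    rwa [h4] at this
  rcases le_max_iff.mp h2 with h3 | h3
  · exact h3
  · exact absurd h3 (not_le.mpr h)

end Aux2

section Aux3

variable {Fq : Type*} [Field Fq] [Fintype Fq] {C : Type*} [NormedField C]
  [Algebra (LaurentSeries Fq) C]
  (hna : ∀ x y : C, ‖x + y‖ ≤ max ‖x‖ ‖y‖)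
  (hext : ∀ x : LaurentSeries Fq, ‖algebraMap (LaurentSeries Fq) C x‖ = absK Fq x)

local notation "em" => algebraMap (LaurentSeries Fq) C
local notation "qq" => (Fintype.card Fq : ℝ)

include hna hext

/-- `‖e·ω + f‖ = max (‖e‖‖ω‖) ‖f‖` for `e, f ∈ K_∞`, since the two norms can never agree
(`‖ω‖ = q^r` with `r` non-integral). -/
lemma norm_lin {ω : C} {r : ℚ} (hr : ∀ m : ℤ, r ≠ (m : ℚ))
    (hω : ‖ω‖ = qq ^ (r : ℝ)) (e f : LaurentSeries Fq) :
    ‖em e * ω + em f‖ = max (‖em e‖ * ‖ω‖) ‖em f‖ := by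
  by_cases he : e = 0
  · simp only [he, map_zero, norm_zero, zero_mul, zero_add]
    rw [max_eq_right (norm_nonneg _)]
  by_cases hf : f = 0
  · simp only [hf, map_zero, norm_zero, add_zero]
    rw [norm_mul, max_eq_left (by positivity)]
  rw [← norm_mul]
  refine aux_add_max hna ?_
  obtain ⟨m1, h1⟩ := aux_norm_mem hext e he
  obtain ⟨m2, h2⟩ := aux_norm_mem hext f hf
  rw [norm_mul, h1, h2, hω, ← Real.rpow_add (hq0 (Fq := Fq))]
  intro heq
  have h3 := rpow_inj (Fq := Fq) heq
  refine hr (m2 - m1) ?_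
  have h4 : (r : ℝ) = ((m2 - m1 : ℤ) : ℝ) := by push_cast; linarith
  exact_mod_cast h4

/-- Main computation: the imaginary part of `γ·ω` equals `q^(m+r)` or `q^(m-r)` for some
integer `m`; in particular it is never an integral power of `q`. -/
lemma imNorm_moebius {ω : C} {r : ℚ} (hr : ∀ m : ℤ, r ≠ (m : ℚ))
    (hω : ‖ω‖ = qq ^ (r : ℝ))
    (a₁ b₁ c₁ d₁ : LaurentSeries Fq)
    (hdet : ‖em (a₁ * d₁ - b₁ * c₁)‖ = 1) :
    ∃ m : ℤ,
      imNorm Fq ((em a₁ * ω + em b₁) / (em c₁ * ω + em d₁)) = qq ^ ((m : ℝ) + (r : ℝ)) ∨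
      imNorm Fq ((em a₁ * ω + em b₁) / (em c₁ * ω + em d₁)) = qq ^ ((m : ℝ) - (r : ℝ)) := by
  have hq : (1:ℝ) < qq := hq1 (Fq := Fq)
  have hq0' : (0:ℝ) < qq := hq0 (Fq := Fq)
  have hω0 : (0:ℝ) < ‖ω‖ := by rw [hω]; positivity
  have hDw : ‖em c₁ * ω + em d₁‖ = max (‖em c₁‖ * ‖ω‖) ‖em d₁‖ := norm_lin hna hext hr hω c₁ d₁
  have hcd : ¬(c₁ = 0 ∧ d₁ = 0) := by
    rintro ⟨rfl, rfl⟩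
    rw [mul_zero, mul_zero, sub_zero, map_zero, norm_zero] at hdet
    exact zero_ne_one hdet
  have hDpos : 0 < ‖em c₁ * ω + em d₁‖ := by
    rw [hDw]
    rcases Classical.em (c₁ = 0) with hc | hc
    · have hd : d₁ ≠ 0 := fun hd => hcd ⟨hc, hd⟩
      exact lt_max_of_lt_right (norm_pos_iff.mpr (em_ne_zero hd))
    · exact lt_max_of_lt_left (mul_pos (norm_pos_iff.mpr (em_ne_zero hc)) hω0)
  have hDne : em c₁ * ω + em d₁ ≠ 0 := norm_pos_iff.mp hDpos
  have hsub : ∀ x : LaurentSeries Fq,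
      ‖(em a₁ * ω + em b₁) / (em c₁ * ω + em d₁) - em x‖
        = ‖em (a₁ - x * c₁) * ω + em (b₁ - x * d₁)‖ / ‖em c₁ * ω + em d₁‖ := by
    intro x
    have hnum : (em a₁ * ω + em b₁) / (em c₁ * ω + em d₁) - em x
        = (em (a₁ - x * c₁) * ω + em (b₁ - x * d₁)) / (em c₁ * ω + em d₁) := by
      rw [map_sub, map_sub, _root_.map_mul, _root_.map_mul]
      rw [eq_div_iff hDne, sub_mul, div_mul_cancel₀ _ hDne]
      ring
    rw [hnum, norm_div]
  have hN : ∀ x : LaurentSeries Fq,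
      ‖em (a₁ - x * c₁) * ω + em (b₁ - x * d₁)‖
        = max (‖em (a₁ - x * c₁)‖ * ‖ω‖) ‖em (b₁ - x * d₁)‖ :=
    fun x => norm_lin hna hext hr hω _ _
  have htrick : ∀ x : LaurentSeries Fq,
      1 ≤ max (‖em (a₁ - x * c₁)‖ * ‖em d₁‖) (‖em (b₁ - x * d₁)‖ * ‖em c₁‖) := by
    intro x
    have hid : (a₁ - x * c₁) * d₁ - (b₁ - x * d₁) * c₁ = a₁ * d₁ - b₁ * c₁ := by ring
    calc (1:ℝ) = ‖em ((a₁ - x * c₁) * d₁ - (b₁ - x * d₁) * c₁)‖ := by rw [hid, hdet]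
      _ ≤ max ‖em ((a₁ - x * c₁) * d₁)‖ ‖em ((b₁ - x * d₁) * c₁)‖ := by
          rw [map_sub]; exact aux_sub_max hna _ _
      _ = max (‖em (a₁ - x * c₁)‖ * ‖em d₁‖) (‖em (b₁ - x * d₁)‖ * ‖em c₁‖) := by
          rw [_root_.map_mul, _root_.map_mul, norm_mul, norm_mul]
  rcases Classical.em (c₁ = 0) with hc | hc
  -- Case 1 : c₁ = 0
  · have hd : d₁ ≠ 0 := fun hd => hcd ⟨hc, hd⟩
    have ha : a₁ ≠ 0 := by
      rintro rfl
      rw [hc, zero_mul, mul_zero, sub_zero, map_zero, norm_zero] at hdet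
      exact zero_ne_one hdet
    have him : imNorm Fq ((em a₁ * ω + em b₁) / (em c₁ * ω + em d₁))
        = ‖em a₁‖ * ‖ω‖ / ‖em c₁ * ω + em d₁‖ := by
      apply le_antisymm
      · have h1 := imNorm_le (Fq := Fq) ((em a₁ * ω + em b₁) / (em c₁ * ω + em d₁)) (b₁ / d₁)
        rw [hsub (b₁ / d₁), hN] at h1
        have eq1 : max (‖em (a₁ - b₁ / d₁ * c₁)‖ * ‖ω‖) ‖em (b₁ - b₁ / d₁ * d₁)‖
            = ‖em a₁‖ * ‖ω‖ := by
          rw [hc, mul_zero, sub_zero, div_mul_cancel₀ _ hd, sub_self, map_zero, norm_zero,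
            max_eq_left (by positivity)]
        rwa [eq1] at h1
      · refine le_imNorm fun x => ?_
        rw [hsub x, hN]
        gcongr
        rw [hc, mul_zero, sub_zero]
        exact le_max_left _ _
    obtain ⟨ma, hma⟩ := aux_norm_mem hext a₁ ha
    obtain ⟨md, hmd⟩ := aux_norm_mem hext d₁ hd
    have hDd : ‖em c₁ * ω + em d₁‖ = ‖em d₁‖ := by
      rw [hDw, hc, map_zero, norm_zero, zero_mul, max_eq_right (norm_nonneg _)]
    refine ⟨ma - md, Or.inl ?_⟩
    rw [him, hDd, hma, hmd, hω, ← Real.rpow_add hq0', ← Real.rpow_sub hq0']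
    congr 1
    push_cast
    ring
  -- c₁ ≠ 0
  · have hcpos : (0:ℝ) < ‖em c₁‖ := norm_pos_iff.mpr (em_ne_zero hc)
    obtain ⟨mc, hmc⟩ := aux_norm_mem hext c₁ hc
    rcases lt_trichotomy ‖em d₁‖ (‖em c₁‖ * ‖ω‖) with hlt | heq | hgt
    -- Case 2 : ‖d₁‖ < ‖c₁‖‖ω‖, so ‖Dw‖ = ‖c₁‖‖ω‖
    · have hDd : ‖em c₁ * ω + em d₁‖ = ‖em c₁‖ * ‖ω‖ := by rw [hDw, max_eq_left hlt.le]
      have him : imNorm Fq ((em a₁ * ω + em b₁) / (em c₁ * ω + em d₁))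
          = ‖em c₁‖⁻¹ / ‖em c₁ * ω + em d₁‖ := by
        apply le_antisymm
        · have h1 := imNorm_le (Fq := Fq) ((em a₁ * ω + em b₁) / (em c₁ * ω + em d₁)) (a₁ / c₁)
          rw [hsub (a₁ / c₁), hN] at h1
          have hb1 : b₁ - a₁ / c₁ * d₁ = -(a₁ * d₁ - b₁ * c₁) / c₁ := by field_simp; ring
          have eq1 : max (‖em (a₁ - a₁ / c₁ * c₁)‖ * ‖ω‖) ‖em (b₁ - a₁ / c₁ * d₁)‖
              = ‖em c₁‖⁻¹ := by
            rw [div_mul_cancel₀ _ hc, sub_self, map_zero, norm_zero, zero_mul, hb1, map_div₀,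
              norm_div, map_neg, norm_neg, hdet, max_eq_right (by positivity), one_div]
          rwa [eq1] at h1
        · refine le_imNorm fun x => ?_
          rw [hsub x, hN]
          gcongr
          rcases le_max_iff.mp (htrick x) with h | h
          · have hmul : ‖em (a₁ - x * c₁)‖ * ‖em d₁‖
                ≤ ‖em (a₁ - x * c₁)‖ * (‖em c₁‖ * ‖ω‖) :=
              mul_le_mul_of_nonneg_left hlt.le (norm_nonneg _)
            refine le_max_of_le_left ?_
            rw [inv_eq_one_div, div_le_iff₀ hcpos]
            nlinarith [norm_nonneg ((em : LaurentSeries Fq →+* C) (a₁ - x * c₁))]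
          · have h2 : ‖em c₁‖⁻¹ ≤ ‖em (b₁ - x * d₁)‖ := by
              rw [inv_eq_one_div, div_le_iff₀ hcpos]; linarith
            exact le_max_of_le_right h2
      refine ⟨-(2 * mc), Or.inr ?_⟩
      rw [him, hDd, hmc, hω, ← Real.rpow_neg hq0'.le, ← Real.rpow_add hq0',
        ← Real.rpow_sub hq0']
      congr 1
      push_cast
      ring
    -- impossible middle case
    · exfalso
      rcases Classical.em (d₁ = 0) with hd | hd
      · rw [hd, map_zero, norm_zero] at heq
        have : (0:ℝ) < ‖em c₁‖ * ‖ω‖ := by positivity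
        linarith
      · obtain ⟨md, hmd⟩ := aux_norm_mem hext d₁ hd
        rw [hmd, hmc, hω, ← Real.rpow_add hq0'] at heq
        have h3 := rpow_inj (Fq := Fq) heq
        refine hr (md - mc) ?_
        have h4 : (r : ℝ) = ((md - mc : ℤ) : ℝ) := by push_cast; linarith
        exact_mod_cast h4
    -- Case 3 : ‖d₁‖ > ‖c₁‖‖ω‖, so ‖Dw‖ = ‖d₁‖
    · have hd : d₁ ≠ 0 := by
        rintro rfl
        rw [map_zero, norm_zero] at hgt
        have : (0:ℝ) < ‖em c₁‖ * ‖ω‖ := by positivity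
        linarith
      have hdpos : (0:ℝ) < ‖em d₁‖ := norm_pos_iff.mpr (em_ne_zero hd)
      have hDd : ‖em c₁ * ω + em d₁‖ = ‖em d₁‖ := by rw [hDw, max_eq_right hgt.le]
      have him : imNorm Fq ((em a₁ * ω + em b₁) / (em c₁ * ω + em d₁))
          = ‖em d₁‖⁻¹ * ‖ω‖ / ‖em c₁ * ω + em d₁‖ := by
        apply le_antisymm
        · have h1 := imNorm_le (Fq := Fq) ((em a₁ * ω + em b₁) / (em c₁ * ω + em d₁)) (b₁ / d₁)
          rw [hsub (b₁ / d₁), hN] at h1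
          have hb1 : a₁ - b₁ / d₁ * c₁ = (a₁ * d₁ - b₁ * c₁) / d₁ := by field_simp
          have eq1 : max (‖em (a₁ - b₁ / d₁ * c₁)‖ * ‖ω‖) ‖em (b₁ - b₁ / d₁ * d₁)‖
              = ‖em d₁‖⁻¹ * ‖ω‖ := by
            rw [div_mul_cancel₀ _ hd, sub_self, map_zero, norm_zero, hb1, map_div₀,
              norm_div, hdet, max_eq_left (by positivity), one_div]
          rwa [eq1] at h1
        · refine le_imNorm fun x => ?_
          rw [hsub x, hN]
          gcongr
          rcases le_max_iff.mp (htrick x) with h | h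
          · have h2 : (1:ℝ) / ‖em d₁‖ ≤ ‖em (a₁ - x * c₁)‖ := by
              rw [div_le_iff₀ hdpos]; linarith
            refine le_max_of_le_left ?_
            rw [inv_eq_one_div]
            exact mul_le_mul_of_nonneg_right h2 hω0.le
          · have h2 : (1:ℝ) / ‖em c₁‖ ≤ ‖em (b₁ - x * d₁)‖ := by
              rw [div_le_iff₀ hcpos]; linarith
            refine le_max_of_le_right ?_
            refine le_trans ?_ h2
            rw [inv_eq_one_div, div_mul_eq_mul_div, div_le_div_iff₀ hdpos hcpos]
            nlinarith [hgt]
      obtain ⟨md, hmd⟩ := aux_norm_mem hext d₁ hd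
      refine ⟨-(2 * md), Or.inl ?_⟩
      rw [him, hDd, hmd, hω, ← Real.rpow_neg hq0'.le, ← Real.rpow_add hq0',
        ← Real.rpow_sub hq0']
      congr 1
      push_cast
      ring

end Aux3

section Aux4

variable {Fq : Type*} [Field Fq] [Fintype Fq] {C : Type*} [NormedField C]
  [Algebra (LaurentSeries Fq) C]
  (hext : ∀ x : LaurentSeries Fq, ‖algebraMap (LaurentSeries Fq) C x‖ = absK Fq x)

include hext

lemma norm_em_Tel : ‖algebraMap (LaurentSeries Fq) C (Tel Fq)‖ = (Fintype.card Fq : ℝ) := by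
  have hT0 : (Tel Fq) ≠ 0 := HahnSeries.single_ne_zero one_ne_zero
  rw [hext, absK, if_neg hT0, Tel, HahnSeries.order_single one_ne_zero, neg_neg, zpow_one]

lemma norm_em_aeval_unit {u : Polynomial Fq} (hu : IsUnit u) :
    ‖algebraMap (LaurentSeries Fq) C (Polynomial.aeval (Tel Fq) u)‖ = 1 := by
  obtain ⟨k, hk, rfl⟩ := Polynomial.isUnit_iff.mp hu
  have hk0 : k ≠ 0 := hk.ne_zero
  rw [Polynomial.aeval_C, hext, absK]
  have h1 : (algebraMap Fq (LaurentSeries Fq)) k = HahnSeries.single (0 : ℤ) k := by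
    rw [HahnSeries.algebraMap_apply', PowerSeries.algebraMap_apply]
    simp [HahnSeries.ofPowerSeries_C, HahnSeries.C_apply]
  rw [h1, if_neg (HahnSeries.single_ne_zero hk0), HahnSeries.order_single hk0, neg_zero,
    zpow_zero]

end Aux4

/-- **Corollary 5.5.**  Suppose `|ω| = |ω|_i = q^r` with `r ∈ ℚ \ ℤ`, and let
`z_n = s + T^{-n}·ζ` (`|ζ| = |ζ|_i = 1`).  Assume the bound
`|F_{γ,s}(z) - 1| ≤ |z - s|·C₀ / (|z - γω|·|c·ω + d|)` for all `γ ∈ Γ` and all `z`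
with `|z|_i > 0`, `z ≠ γω`, and assume `|s - γω| ≥ κ / |c·ω + d|` for all `γ ∈ Γ`
with `κ > 0`.  Then for every `ε > 0` there is `n₂` such that for all `n ≥ n₂` and
all `γ ∈ Γ`: `z_n ≠ γω` and `|F_{γ,s}(z_n) - 1| ≤ ε`. -/
theorem F_gamma_all_gamma {Fq : Type*} [Field Fq] [Fintype Fq]
    {C : Type*} [NormedField C] [Algebra (LaurentSeries Fq) C]
    (hna : ∀ x y : C, ‖x + y‖ ≤ max ‖x‖ ‖y‖)
    (hext : ∀ x : LaurentSeries Fq, ‖algebraMap (LaurentSeries Fq) C x‖ = absK Fq x)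
    (Γ : Subgroup (GL (Fin 2) (Polynomial Fq))) (α : GL (Fin 2) (Polynomial Fq)) (hα : α ∈ Γ)
    (ω : C) (r : ℚ) (hr : ∀ m : ℤ, r ≠ (m : ℚ))
    (hωabs : ‖ω‖ = (Fintype.card Fq : ℝ) ^ (r : ℝ))
    (hωi : imNorm Fq ω = (Fintype.card Fq : ℝ) ^ (r : ℝ))
    (s : C) (hs : ∃ p r : Polynomial Fq, r ≠ 0 ∧ s = polyEmb Fq C p / polyEmb Fq C r)
    (ζ : C) (hζ : ‖ζ‖ = 1) (hζi : imNorm Fq ζ = 1)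
    (zseq : ℕ → C) (hz : ∀ n : ℕ, zseq n = s + (polyEmb Fq C Polynomial.X)⁻¹ ^ n * ζ)
    (C₀ : ℝ) (hC₀ : 0 < C₀)
    (hbd : ∀ γ ∈ Γ, ∀ z : C, 0 < imNorm Fq z → z ≠ act γ ω →
      ‖((s - act γ ω) * (z - act γ (act α ω))) /
          ((s - act γ (act α ω)) * (z - act γ ω)) - 1‖
        ≤ ‖z - s‖ * C₀ /
            (‖z - act γ ω‖ * ‖polyEmb Fq C (γ.val 1 0) * ω + polyEmb Fq C (γ.val 1 1)‖))
    (κ : ℝ) (hκ : 0 < κ)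
    (hlow : ∀ γ ∈ Γ, κ / ‖polyEmb Fq C (γ.val 1 0) * ω + polyEmb Fq C (γ.val 1 1)‖
      ≤ ‖s - act γ ω‖) :
    ∀ ε : ℝ, 0 < ε → ∃ n₂ : ℕ, ∀ n ≥ n₂, ∀ γ ∈ Γ,
      zseq n ≠ act γ ω ∧
      ‖((s - act γ ω) * (zseq n - act γ (act α ω))) /
          ((s - act γ (act α ω)) * (zseq n - act γ ω)) - 1‖ ≤ ε := by
  intro ε hε
  have hq : (1:ℝ) < (Fintype.card Fq : ℝ) := hq1 (Fq := Fq)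
  have hq0' : (0:ℝ) < (Fintype.card Fq : ℝ) := hq0 (Fq := Fq)
  have hωpos : (0:ℝ) < ‖ω‖ := by rw [hωabs]; positivity
  -- `s` is the image of an element of `K_∞`
  obtain ⟨p, r', hr', hs'⟩ := hs
  have hpoly : ∀ P : Polynomial Fq,
      polyEmb Fq C P = algebraMap (LaurentSeries Fq) C (Polynomial.aeval (Tel Fq) P) :=
    fun P => rfl
  have hsem : s = algebraMap (LaurentSeries Fq) C
      (Polynomial.aeval (Tel Fq) p / Polynomial.aeval (Tel Fq) r') := by
    rw [hs', hpoly, hpoly, map_div₀]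
  set xs : LaurentSeries Fq := Polynomial.aeval (Tel Fq) p / Polynomial.aeval (Tel Fq) r'
  -- basic facts about `z_n - s`
  have hT0 : (Tel Fq) ≠ 0 := HahnSeries.single_ne_zero one_ne_zero
  have hTn0 : ∀ n : ℕ, ((Tel Fq)⁻¹ ^ n) ≠ 0 := fun n => pow_ne_zero _ (inv_ne_zero hT0)
  have hXemb : polyEmb Fq C Polynomial.X = algebraMap (LaurentSeries Fq) C (Tel Fq) := by
    rw [hpoly, Polynomial.aeval_X]
  have hzs : ∀ n : ℕ, zseq n - s = algebraMap (LaurentSeries Fq) C ((Tel Fq)⁻¹ ^ n) * ζ := by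
    intro n
    rw [hz n, hXemb, ← map_inv₀, ← map_pow]
    ring
  have hTninv : ∀ n : ℕ, ‖algebraMap (LaurentSeries Fq) C ((Tel Fq)⁻¹ ^ n)‖
      = ((Fintype.card Fq : ℝ))⁻¹ ^ n := by
    intro n
    rw [map_pow, map_inv₀, norm_pow, norm_inv, norm_em_Tel hext]
  have htn_pos : ∀ n : ℕ, (0:ℝ) < ((Fintype.card Fq : ℝ))⁻¹ ^ n := fun n => by positivity
  have hzsn : ∀ n : ℕ, ‖zseq n - s‖ = ((Fintype.card Fq : ℝ))⁻¹ ^ n := by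
    intro n
    rw [hzs n, norm_mul, hζ, mul_one, hTninv n]
  have him_zn_sub : ∀ n : ℕ, imNorm Fq (zseq n - s) = ((Fintype.card Fq : ℝ))⁻¹ ^ n := by
    intro n
    rw [hzs n, imNorm_smul (hTn0 n), hTninv n, hζi, mul_one]
  have him_zn : ∀ n : ℕ, imNorm Fq (zseq n) = ((Fintype.card Fq : ℝ))⁻¹ ^ n := by
    intro n
    have h1 : zseq n = (zseq n - s) + algebraMap (LaurentSeries Fq) C xs := by
      rw [← hsem]; ring
    rw [h1, imNorm_add_em, him_zn_sub]
  have hpow : ∀ n : ℕ, ((Fintype.card Fq : ℝ))⁻¹ ^ n = (Fintype.card Fq : ℝ) ^ (-(n:ℝ)) := by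
    intro n
    rw [Real.rpow_neg hq0'.le, Real.rpow_natCast, inv_pow]
  -- choice of n₂
  obtain ⟨N, hN⟩ := exists_nat_gt (C₀ / (κ * ε))
  refine ⟨N, fun n hn γ hγ => ?_⟩
  -- matrix entries
  set a₁ : LaurentSeries Fq := Polynomial.aeval (Tel Fq) (γ.val 0 0) with ha₁
  set b₁ : LaurentSeries Fq := Polynomial.aeval (Tel Fq) (γ.val 0 1) with hb₁
  set c₁ : LaurentSeries Fq := Polynomial.aeval (Tel Fq) (γ.val 1 0) with hc₁
  set d₁ : LaurentSeries Fq := Polynomial.aeval (Tel Fq) (γ.val 1 1) with hd₁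
  have hact : act γ ω = (algebraMap (LaurentSeries Fq) C a₁ * ω
      + algebraMap (LaurentSeries Fq) C b₁) / (algebraMap (LaurentSeries Fq) C c₁ * ω
      + algebraMap (LaurentSeries Fq) C d₁) := rfl
  have hDform : ‖polyEmb Fq C (γ.val 1 0) * ω + polyEmb Fq C (γ.val 1 1)‖
      = ‖algebraMap (LaurentSeries Fq) C c₁ * ω + algebraMap (LaurentSeries Fq) C d₁‖ := rfl
  have hu : IsUnit (γ.val.det) := (Matrix.isUnit_iff_isUnit_det _).mp ⟨γ, rfl⟩
  have hdetγ : ‖algebraMap (LaurentSeries Fq) C (a₁ * d₁ - b₁ * c₁)‖ = 1 := by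
    have h2 : a₁ * d₁ - b₁ * c₁ = Polynomial.aeval (Tel Fq) (γ.val.det) := by
      rw [Matrix.det_fin_two, map_sub, _root_.map_mul, _root_.map_mul, ha₁, hb₁, hc₁, hd₁]
    rw [h2]
    exact norm_em_aeval_unit hext hu
  -- the denominator is nonzero
  have hcd : ¬(c₁ = 0 ∧ d₁ = 0) := by
    rintro ⟨h1, h2⟩
    rw [h1, h2, mul_zero, mul_zero, sub_zero, map_zero, norm_zero] at hdetγ
    exact zero_ne_one hdetγ
  have hDw : ‖algebraMap (LaurentSeries Fq) C c₁ * ω + algebraMap (LaurentSeries Fq) C d₁‖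
      = max (‖algebraMap (LaurentSeries Fq) C c₁‖ * ‖ω‖)
        ‖algebraMap (LaurentSeries Fq) C d₁‖ := norm_lin hna hext hr hωabs c₁ d₁
  have hD0pos : 0 < ‖polyEmb Fq C (γ.val 1 0) * ω + polyEmb Fq C (γ.val 1 1)‖ := by
    rw [hDform, hDw]
    rcases Classical.em (c₁ = 0) with hc | hc
    · have hd : d₁ ≠ 0 := fun hd => hcd ⟨hc, hd⟩
      exact lt_max_of_lt_right (norm_pos_iff.mpr (em_ne_zero hd))
    · exact lt_max_of_lt_left (mul_pos (norm_pos_iff.mpr (em_ne_zero hc)) hωpos)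
  -- the imaginary part of γω is never a negative-integral power of q
  obtain ⟨m, hm⟩ := imNorm_moebius hna hext hr hωabs a₁ b₁ c₁ d₁ hdetγ
  have himγ_ne : imNorm Fq (act γ ω) ≠ ((Fintype.card Fq : ℝ))⁻¹ ^ n := by
    rw [hact, hpow n]
    rcases hm with hm | hm
    · rw [hm]
      intro hcon
      have h3 := rpow_inj (Fq := Fq) hcon
      refine hr (-(n : ℤ) - m) ?_
      have h4 : (r : ℝ) = ((-(n : ℤ) - m : ℤ) : ℝ) := by push_cast; linarith
      exact_mod_cast h4
    · rw [hm]
      intro hcon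
      have h3 := rpow_inj (Fq := Fq) hcon
      refine hr (m + (n : ℤ)) ?_
      have h4 : (r : ℝ) = ((m + (n : ℤ) : ℤ) : ℝ) := by push_cast; linarith
      exact_mod_cast h4
  -- the crucial lower bound, by cases
  have key : zseq n ≠ act γ ω ∧
      κ ≤ ‖zseq n - act γ ω‖ * ‖polyEmb Fq C (γ.val 1 0) * ω + polyEmb Fq C (γ.val 1 1)‖ := by
    rcases lt_or_ge (((Fintype.card Fq : ℝ))⁻¹ ^ n) ‖s - act γ ω‖ with hA | hB
    · -- Case A : far from s
      have hsplit : zseq n - act γ ω = (zseq n - s) + (s - act γ ω) := by ring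
      have hnorm_eq : ‖zseq n - act γ ω‖ = ‖s - act γ ω‖ := by
        rw [hsplit]
        exact aux_add_right hna (by rw [hzsn n]; exact hA)
      have hpos : 0 < ‖zseq n - act γ ω‖ := by
        rw [hnorm_eq]; exact lt_trans (htn_pos n) hA
      refine ⟨sub_ne_zero.mp (norm_pos_iff.mp hpos), ?_⟩
      have h2 := hlow γ hγ
      rw [← hnorm_eq] at h2
      exact (div_le_iff₀ hD0pos).mp h2
    · -- Case B : close to s
      have h3 : imNorm Fq (act γ ω) = imNorm Fq (act γ ω - s) := by
        have h4 : act γ ω - s = act γ ω + algebraMap (LaurentSeries Fq) C (-xs) := by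
          rw [map_neg, ← hsem]; ring
        rw [h4, imNorm_add_em]
      have himγ_le : imNorm Fq (act γ ω) ≤ ((Fintype.card Fq : ℝ))⁻¹ ^ n := by
        rw [h3]
        exact (imNorm_le_norm _).trans (by rw [norm_sub_rev]; exact hB)
      have himγ_lt : imNorm Fq (act γ ω) < ((Fintype.card Fq : ℝ))⁻¹ ^ n :=
        lt_of_le_of_ne himγ_le himγ_ne
      have hs_id : imNorm Fq (s - act γ ω) = imNorm Fq (act γ ω) := by
        rw [show s - act γ ω = -(act γ ω - s) by ring, imNorm_neg, ← h3]
      have him_sub : imNorm Fq (zseq n - act γ ω) = ((Fintype.card Fq : ℝ))⁻¹ ^ n := by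
        have hsplit : zseq n - act γ ω = (zseq n - s) + (s - act γ ω) := by ring
        rw [hsplit, imNorm_add_eq_left hna (by rw [hs_id, him_zn_sub n]; exact himγ_lt),
          him_zn_sub n]
      have hlb : ((Fintype.card Fq : ℝ))⁻¹ ^ n ≤ ‖zseq n - act γ ω‖ := by
        rw [← him_sub]; exact imNorm_le_norm _
      have hpos : 0 < ‖zseq n - act γ ω‖ := lt_of_lt_of_le (htn_pos n) hlb
      refine ⟨sub_ne_zero.mp (norm_pos_iff.mp hpos), ?_⟩
      have h2 := (hlow γ hγ).trans hB
      have h5 := (div_le_iff₀ hD0pos).mp h2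
      calc κ ≤ ((Fintype.card Fq : ℝ))⁻¹ ^ n
            * ‖polyEmb Fq C (γ.val 1 0) * ω + polyEmb Fq C (γ.val 1 1)‖ := h5
        _ ≤ ‖zseq n - act γ ω‖
            * ‖polyEmb Fq C (γ.val 1 0) * ω + polyEmb Fq C (γ.val 1 1)‖ :=
          mul_le_mul_of_nonneg_right hlb hD0pos.le
  obtain ⟨hneq, hprod⟩ := key
  refine ⟨hneq, ?_⟩
  have hmain := hbd γ hγ (zseq n) (by rw [him_zn n]; exact htn_pos n) hneq
  have hqn_pos : (0:ℝ) < (Fintype.card Fq : ℝ) ^ n := pow_pos hq0' n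
  have hqn_big : C₀ / (κ * ε) < (Fintype.card Fq : ℝ) ^ n := by
    have h1 : ((N:ℝ)) < 2 ^ N := by exact_mod_cast Nat.lt_two_pow_self (n := N)
    have h2 : (2:ℝ) ^ N ≤ (Fintype.card Fq : ℝ) ^ N := by
      apply pow_le_pow_left₀ (by norm_num)
      have : (2:ℕ) ≤ Fintype.card Fq := Fintype.one_lt_card
      exact_mod_cast this
    have h3 : (Fintype.card Fq : ℝ) ^ N ≤ (Fintype.card Fq : ℝ) ^ n :=
      pow_le_pow_right₀ hq.le hn
    linarith
  have hC : C₀ < (Fintype.card Fq : ℝ) ^ n * (κ * ε) :=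
    (div_lt_iff₀ (mul_pos hκ hε)).mp hqn_big |>.trans_le (by rw [mul_comm])
  calc ‖((s - act γ ω) * (zseq n - act γ (act α ω))) /
          ((s - act γ (act α ω)) * (zseq n - act γ ω)) - 1‖
      ≤ ‖zseq n - s‖ * C₀ /
          (‖zseq n - act γ ω‖ * ‖polyEmb Fq C (γ.val 1 0) * ω + polyEmb Fq C (γ.val 1 1)‖) :=
        hmain
    _ ≤ ‖zseq n - s‖ * C₀ / κ := by
        apply div_le_div_of_nonneg_left (by positivity) hκ hprod
    _ ≤ ε := by
        rw [hzsn n, inv_pow, div_le_iff₀ hκ, inv_mul_le_iff₀ hqn_pos]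
        nlinarith [hC]
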